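/- Let A be a Banach *-algebra and I ⊆ A a two-sided *-ideal. Then the maximal C*-seminorm of I coincides with the restriction to I of the maximal C*-seminorm of A; consequently the C*-envelope C*(I) is isometrically isomorphic to the closure of the image of I in C*(A). -/

import Mathlib

/-- The maximal C*-seminorm `γ_A(x) = sup {‖π x‖}` over all continuous *-representations of a
Banach *-algebra `A` on Hilbert spaces. -/
noncomputable def maxCstarSeminorm (A : Type) [NonUnitalNormedRing A] [StarRing A]
    [NormedSpace ℂ A] [IsScalarTower ℂ A A] [SMulCommClass ℂ A A] [StarModule ℂ A] (x : A) : ℝ :=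
  sSup {r : ℝ | ∃ (H : Type) (_ : NormedAddCommGroup H) (_ : InnerProductSpace ℂ H)
    (_ : CompleteSpace H) (π : A →⋆ₙₐ[ℂ] (H →L[ℂ] H)), Continuous π ∧ r = ‖π x‖}

/-- The maximal C*-seminorm of a *-subalgebra `I` (e.g. a two-sided *-ideal) of `A`,
computed from the continuous *-representations of `I` itself. -/
noncomputable def maxCstarSeminormIdeal {A : Type} [NonUnitalNormedRing A] [StarRing A]
    [NormedSpace ℂ A] [IsScalarTower ℂ A A] [SMulCommClass ℂ A A] [StarModule ℂ A]
    (I : NonUnitalStarSubalgebra ℂ A) (x : I) : ℝ :=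
  sSup {r : ℝ | ∃ (H : Type) (_ : NormedAddCommGroup H) (_ : InnerProductSpace ℂ H)
    (_ : CompleteSpace H) (π : I →⋆ₙₐ[ℂ] (H →L[ℂ] H)), Continuous π ∧ r = ‖π x‖}

open scoped InnerProductSpace

/-!
Every continuous *-representation `π` of `I` on `H` extends to one of `A` on the same space, so
both suprema run over the same numbers. On vectors `∑ cᵢ π(xᵢ)ξᵢ` set
`ρ(a)(∑ cᵢ π(xᵢ)ξᵢ) = ∑ cᵢ π(a xᵢ)ξᵢ`, and let `ρ(a)` vanish on the orthogonal complement of the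
closed span `N` of these vectors. This is well defined and of norm at most `‖a‖`: for a fixed
formal sum, `T a = ∑ cᵢ π(a xᵢ)ξᵢ` is continuous and linear in `a`, and
`‖T a‖² = ⟪∑ cᵢ π(xᵢ)ξᵢ, T (a⋆a)⟫ ≤ ‖∑ cᵢ π(xᵢ)ξᵢ‖ ‖T‖ ‖a‖²`, so `‖T‖ ≤ ‖∑ cᵢ π(xᵢ)ξᵢ‖`.
The *-homomorphism identities for `ρ` are then checked on the vectors `π(x)ξ` and on `Nᗮ`, which
together span a dense subspace.
-/

theorem ContinuousLinearMap.opNorm_le_of_norm_sq_le {𝕜 A E : Type*} [NontriviallyNormedField 𝕜]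
    [NonUnitalSeminormedRing A] [StarRing A] [NormedStarGroup A] [NormedSpace 𝕜 A]
    [SeminormedAddCommGroup E] [NormedSpace 𝕜 E] (T : A →L[𝕜] E) {c : ℝ} (hc : 0 ≤ c)
    (h : ∀ a, ‖T a‖ ^ 2 ≤ c * ‖T (star a * a)‖) : ‖T‖ ≤ c := by
  have hT : ‖T‖ ≤ √(c * ‖T‖) := by
    refine T.opNorm_le_bound (Real.sqrt_nonneg _) fun a => ?_
    refine (pow_le_pow_iff_left₀ (norm_nonneg _) (by positivity) two_ne_zero).mp ?_
    calc ‖T a‖ ^ 2 ≤ c * ‖T (star a * a)‖ := h a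
      _ ≤ c * (‖T‖ * (‖star a‖ * ‖a‖)) := by gcongr; exact T.le_opNorm_of_le (norm_mul_le _ _)
      _ = (√(c * ‖T‖) * ‖a‖) ^ 2 := by rw [norm_star, mul_pow, Real.sq_sqrt (by positivity)]; ring
  have hT2 := (Real.le_sqrt (norm_nonneg _) (by positivity)).mp hT
  nlinarith [norm_nonneg T]

theorem inner_linearCombination_congr {𝕜 E ι κ : Type*} [RCLike 𝕜] [SeminormedAddCommGroup E]
    [InnerProductSpace 𝕜 E] {v v' : ι → E} {w w' : κ → E}
    (h : ∀ i j, ⟪v i, w j⟫_𝕜 = ⟪v' i, w' j⟫_𝕜) (f : ι →₀ 𝕜) (g : κ →₀ 𝕜) :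
    ⟪Finsupp.linearCombination 𝕜 v f, Finsupp.linearCombination 𝕜 w g⟫_𝕜 =
      ⟪Finsupp.linearCombination 𝕜 v' f, Finsupp.linearCombination 𝕜 w' g⟫_𝕜 := by
  simp only [Finsupp.linearCombination_apply, Finsupp.sum_inner, Finsupp.inner_sum,
    inner_smul_left, inner_smul_right, h]

theorem NonUnitalStarAlgHom.inner_map_apply_left {R H : Type*} [NonUnitalNonAssocSemiring R]
    [Module ℂ R] [Star R] [NormedAddCommGroup H] [InnerProductSpace ℂ H] [CompleteSpace H]
    (π : R →⋆ₙₐ[ℂ] (H →L[ℂ] H)) (x : R) (ξ η : H) : ⟪π x ξ, η⟫_ℂ = ⟪ξ, π (star x) η⟫_ℂ := by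
  rw [map_star, ContinuousLinearMap.star_eq_adjoint, ContinuousLinearMap.adjoint_inner_right]

namespace IdealRepresentation

variable {A : Type*} [NonUnitalNormedRing A] [StarRing A] [NormedSpace ℂ A]
  {I : NonUnitalStarSubalgebra ℂ A}
  {H : Type*} [NormedAddCommGroup H] [InnerProductSpace ℂ H] [CompleteSpace H]
  (π : I →⋆ₙₐ[ℂ] (H →L[ℂ] H))

noncomputable def evalSum : (I × H →₀ ℂ) →ₗ[ℂ] H := Finsupp.linearCombination ℂ fun p => π p.1 p.2

theorem evalSum_single (x : I) (ξ : H) : evalSum π (Finsupp.single (x, ξ) 1) = π x ξ := by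
  rw [evalSum, Finsupp.linearCombination_single, one_smul]

noncomputable def essentialSpace : Submodule ℂ H := (LinearMap.range (evalSum π)).topologicalClosure

instance : CompleteSpace (essentialSpace π) := Submodule.topologicalClosure.completeSpace _

theorem evalSum_mem_essentialSpace (f : I × H →₀ ℂ) : evalSum π f ∈ essentialSpace π :=
  Submodule.le_topologicalClosure _ (LinearMap.mem_range_self _ f)

theorem apply_eq_zero_of_mem_orthogonal (x : I) {v : H} (hv : v ∈ (essentialSpace π)ᗮ) :
    π x v = 0 := by
  have hmem : π (star x) (π x v) ∈ essentialSpace π := by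
    simpa only [evalSum_single] using
      evalSum_mem_essentialSpace π (Finsupp.single (star x, π x v) 1)
  rw [← inner_self_eq_zero (𝕜 := ℂ), π.inner_map_apply_left]
  exact Submodule.inner_left_of_mem_orthogonal hmem hv

-- `extendOp` is defined on the range of this map, which is dense, and extended by continuity.
noncomputable def evalSumCoprod : (I × H →₀ ℂ) × (essentialSpace π)ᗮ →ₗ[ℂ] H :=
  (evalSum π).coprod (essentialSpace π)ᗮ.subtype

theorem denseRange_evalSumCoprod : DenseRange (evalSumCoprod π) := by
  rw [DenseRange, ← LinearMap.coe_range, Submodule.dense_iff_topologicalClosure_eq_top,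
    evalSumCoprod, LinearMap.range_coprod, Submodule.range_subtype, eq_top_iff,
    ← Submodule.sup_orthogonal_of_hasOrthogonalProjection (K := essentialSpace π)]
  exact sup_le (Submodule.topologicalClosure_mono le_sup_left)
    (le_sup_right.trans (Submodule.le_topologicalClosure _))

theorem norm_evalSum_le_norm_evalSumCoprod (p : (I × H →₀ ℂ) × (essentialSpace π)ᗮ) :
    ‖evalSum π p.1‖ ≤ ‖evalSumCoprod π p‖ := by
  have hperp : ⟪evalSum π p.1, (p.2 : H)⟫_ℂ = 0 :=
    Submodule.inner_right_of_mem_orthogonal (evalSum_mem_essentialSpace π p.1) p.2.2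
  have hpyth := norm_add_sq_eq_norm_sq_add_norm_sq_of_inner_eq_zero _ _ hperp
  rw [evalSumCoprod, LinearMap.coprod_apply, Submodule.subtype_apply]
  nlinarith [norm_nonneg (evalSum π p.1), norm_nonneg (evalSum π p.1 + p.2), norm_nonneg (p.2 : H)]

theorem ext_of_essentialSpace {F : Type*} [NormedAddCommGroup F] [NormedSpace ℂ F]
    {T T' : H →L[ℂ] F} (hgen : ∀ x ξ, T (π x ξ) = T' (π x ξ))
    (horth : ∀ v ∈ (essentialSpace π)ᗮ, T v = T' v) : T = T' := by
  have hsum : ∀ f, T (evalSum π f) = T' (evalSum π f) := fun f => by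
    simp only [evalSum, Finsupp.linearCombination_apply, map_finsuppSum, map_smul, hgen]
  refine ContinuousLinearMap.coeFn_injective
    ((denseRange_evalSumCoprod π).equalizer T.continuous T'.continuous (funext fun p => ?_))
  simp only [Function.comp_apply, evalSumCoprod, LinearMap.coprod_apply, Submodule.subtype_apply,
    map_add, hsum, horth _ p.2.2]

variable [IsScalarTower ℂ A A] (hleft : ∀ a : A, ∀ x ∈ I, a * x ∈ I)

noncomputable def mulRightMem (x : I) : A →L[ℂ] I where
  toFun a := ⟨a * x, hleft a x x.2⟩
  map_add' a b := Subtype.ext (add_mul a b x)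
  map_smul' c a := Subtype.ext (smul_mul_assoc c a x)
  cont := (continuous_mul_const (x : A)).subtype_mk _

@[simp] theorem coe_mulRightMem_apply (x : I) (a : A) : (mulRightMem hleft x a : A) = a * x :=
  rfl

theorem mulRightMem_mulRightMem (x : I) (a b : A) :
    mulRightMem hleft (mulRightMem hleft x b) a = mulRightMem hleft x (a * b) :=
  Subtype.ext (mul_assoc a b x).symm

noncomputable def actSum (a : A) : (I × H →₀ ℂ) →ₗ[ℂ] (I × H →₀ ℂ) :=
  Finsupp.lmapDomain ℂ ℂ (Prod.map (mulRightMem hleft · a) id)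

theorem evalSum_actSum (a : A) (f : I × H →₀ ℂ) :
    evalSum π (actSum hleft a f) =
      Finsupp.linearCombination ℂ (fun p => π (mulRightMem hleft p.1 a) p.2) f := by
  rw [evalSum, actSum, Finsupp.lmapDomain_apply, Finsupp.linearCombination_mapDomain]
  rfl

theorem inner_evalSum_actSum (a b : A) (f g : I × H →₀ ℂ) :
    ⟪evalSum π (actSum hleft a f), evalSum π (actSum hleft b g)⟫_ℂ =
      ⟪evalSum π f, evalSum π (actSum hleft (star a * b) g)⟫_ℂ := by
  simp only [evalSum_actSum]
  refine inner_linearCombination_congr (fun p q => ?_) f g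
  simp only [π.inner_map_apply_left, ← mul_apply_eq_comp, ← map_mul]
  congr 3
  ext
  simp [star_mul, mul_assoc]

theorem norm_evalSum_actSum_sq_le (a : A) (f : I × H →₀ ℂ) :
    ‖evalSum π (actSum hleft a f)‖ ^ 2 ≤
      ‖evalSum π f‖ * ‖evalSum π (actSum hleft (star a * a) f)‖ := by
  rw [@norm_sq_eq_re_inner ℂ, inner_evalSum_actSum]
  exact (RCLike.re_le_norm _).trans (norm_inner_le_norm _ _)

variable {π}

noncomputable def evalActSumCLM (hπ : Continuous π) (f : I × H →₀ ℂ) : A →L[ℂ] H :=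
  f.sum fun p c => c • (ContinuousLinearMap.apply ℂ H p.2 ∘L
    (⟨(π : I →ₗ[ℂ] (H →L[ℂ] H)), hπ⟩ : I →L[ℂ] (H →L[ℂ] H)) ∘L mulRightMem hleft p.1)

theorem evalActSumCLM_apply (hπ : Continuous π) (f : I × H →₀ ℂ) (a : A) :
    evalActSumCLM hleft hπ f a = evalSum π (actSum hleft a f) := by
  rw [evalSum_actSum, Finsupp.linearCombination_apply, evalActSumCLM, Finsupp.sum, Finsupp.sum,
    sum_apply]
  rfl

variable [NormedStarGroup A]

theorem norm_evalSum_actSum_le (hπ : Continuous π) (a : A) (f : I × H →₀ ℂ) :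
    ‖evalSum π (actSum hleft a f)‖ ≤ ‖a‖ * ‖evalSum π f‖ := by
  have hT : ‖evalActSumCLM hleft hπ f‖ ≤ ‖evalSum π f‖ :=
    (evalActSumCLM hleft hπ f).opNorm_le_of_norm_sq_le (norm_nonneg _) fun b => by
      simpa only [evalActSumCLM_apply] using norm_evalSum_actSum_sq_le π hleft b f
  rw [← evalActSumCLM_apply hleft hπ, mul_comm]
  exact ((evalActSumCLM hleft hπ f).le_opNorm a).trans
    (mul_le_mul_of_nonneg_right hT (norm_nonneg a))

variable (π) in
noncomputable def extendOp (a : A) : H →L[ℂ] H :=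
  ((evalSum π ∘ₗ actSum hleft a) ∘ₗ LinearMap.fst ℂ _ _).extendOfNorm (evalSumCoprod π)

theorem norm_evalSum_actSum_le_norm_evalSumCoprod (hπ : Continuous π) (a : A)
    (p : (I × H →₀ ℂ) × (essentialSpace π)ᗮ) :
    ‖((evalSum π ∘ₗ actSum hleft a) ∘ₗ LinearMap.fst ℂ _ _) p‖ ≤ ‖a‖ * ‖evalSumCoprod π p‖ :=
  (norm_evalSum_actSum_le hleft hπ a p.1).trans
    (mul_le_mul_of_nonneg_left (norm_evalSum_le_norm_evalSumCoprod π p) (norm_nonneg a))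

theorem extendOp_evalSumCoprod (hπ : Continuous π) (a : A)
    (p : (I × H →₀ ℂ) × (essentialSpace π)ᗮ) :
    extendOp π hleft a (evalSumCoprod π p) = evalSum π (actSum hleft a p.1) :=
  LinearMap.extendOfNorm_eq (denseRange_evalSumCoprod π)
    ⟨_, norm_evalSum_actSum_le_norm_evalSumCoprod hleft hπ a⟩ p

theorem extendOp_apply_apply (hπ : Continuous π) (a : A) (x : I) (ξ : H) :
    extendOp π hleft a (π x ξ) = π (mulRightMem hleft x a) ξ := by
  simpa [evalSumCoprod, actSum, evalSum_single] using
    extendOp_evalSumCoprod hleft hπ a (Finsupp.single (x, ξ) 1, 0)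

theorem extendOp_of_mem_orthogonal (hπ : Continuous π) (a : A) {v : H}
    (hv : v ∈ (essentialSpace π)ᗮ) : extendOp π hleft a v = 0 := by
  simpa [evalSumCoprod] using extendOp_evalSumCoprod hleft hπ a (0, ⟨v, hv⟩)

theorem extendOp_mem_essentialSpace (hπ : Continuous π) (a : A) (w : H) :
    extendOp π hleft a w ∈ essentialSpace π := by
  refine (denseRange_evalSumCoprod π).induction_on w
    ((Submodule.isClosed_topologicalClosure _).preimage (extendOp π hleft a).continuous) fun p => ?_
  rw [extendOp_evalSumCoprod hleft hπ]
  exact evalSum_mem_essentialSpace π _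

theorem norm_extendOp_le (hπ : Continuous π) (a : A) : ‖extendOp π hleft a‖ ≤ ‖a‖ :=
  LinearMap.opNorm_extendOfNorm_le (denseRange_evalSumCoprod π) (norm_nonneg a)
    (norm_evalSum_actSum_le_norm_evalSumCoprod hleft hπ a)

theorem extendOp_add (hπ : Continuous π) (a b : A) :
    extendOp π hleft (a + b) = extendOp π hleft a + extendOp π hleft b :=
  ext_of_essentialSpace π (fun x ξ => by simp [extendOp_apply_apply hleft hπ])
    (fun v hv => by simp [extendOp_of_mem_orthogonal hleft hπ _ hv])

theorem extendOp_smul (hπ : Continuous π) (c : ℂ) (a : A) :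
    extendOp π hleft (c • a) = c • extendOp π hleft a :=
  ext_of_essentialSpace π (fun x ξ => by simp [extendOp_apply_apply hleft hπ])
    (fun v hv => by simp [extendOp_of_mem_orthogonal hleft hπ _ hv])

theorem extendOp_mul (hπ : Continuous π) (a b : A) :
    extendOp π hleft (a * b) = extendOp π hleft a * extendOp π hleft b :=
  ext_of_essentialSpace π
    (fun x ξ => by
      simp [mul_apply_eq_comp, extendOp_apply_apply hleft hπ, mulRightMem_mulRightMem])
    (fun v hv => by simp [mul_apply_eq_comp, extendOp_of_mem_orthogonal hleft hπ _ hv])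

theorem apply_comp_extendOp (hright : ∀ a : A, ∀ x ∈ I, x * a ∈ I) (hπ : Continuous π)
    (y : I) (a : A) : π y ∘L extendOp π hleft a = π ⟨y * a, hright a y y.2⟩ := by
  refine ext_of_essentialSpace π (fun x ξ => ?_)
    (fun v hv => by simp [extendOp_of_mem_orthogonal hleft hπ _ hv,
      apply_eq_zero_of_mem_orthogonal π _ hv])
  rw [ContinuousLinearMap.comp_apply, extendOp_apply_apply hleft hπ, ← mul_apply_eq_comp,
    ← mul_apply_eq_comp, ← map_mul, ← map_mul]
  congr 2
  exact Subtype.ext (mul_assoc _ _ _).symm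

theorem extendOp_star (hright : ∀ a : A, ∀ x ∈ I, x * a ∈ I) (hπ : Continuous π) (a : A) :
    extendOp π hleft (star a) = (extendOp π hleft a).adjoint := by
  refine ext_of_essentialSpace π (fun x ξ => ext_inner_right ℂ fun w => ?_) (fun v hv => ?_)
  · calc ⟪extendOp π hleft (star a) (π x ξ), w⟫_ℂ
        = ⟪ξ, π (star (mulRightMem hleft x (star a))) w⟫_ℂ := by
          rw [extendOp_apply_apply hleft hπ, π.inner_map_apply_left]
      _ = ⟪ξ, (π (star x) ∘L extendOp π hleft a) w⟫_ℂ := by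
          rw [apply_comp_extendOp hleft hright hπ]
          congr 3
          exact Subtype.ext (by simp [star_mul])
      _ = ⟪(extendOp π hleft a).adjoint (π x ξ), w⟫_ℂ := by
          rw [ContinuousLinearMap.adjoint_inner_left, π.inner_map_apply_left,
            ContinuousLinearMap.comp_apply]
  · rw [extendOp_of_mem_orthogonal hleft hπ _ hv, eq_comm, ← inner_self_eq_zero (𝕜 := ℂ),
      ContinuousLinearMap.adjoint_inner_left]
    exact Submodule.inner_left_of_mem_orthogonal (extendOp_mem_essentialSpace hleft hπ a _) hv

theorem extendOp_coe (hπ : Continuous π) (x : I) : extendOp π hleft x = π x :=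
  ext_of_essentialSpace π
    (fun y ξ => by rw [extendOp_apply_apply hleft hπ, ← mul_apply_eq_comp, ← map_mul]; rfl)
    (fun v hv => by rw [extendOp_of_mem_orthogonal hleft hπ _ hv,
      apply_eq_zero_of_mem_orthogonal π _ hv])

noncomputable def extend (hright : ∀ a : A, ∀ x ∈ I, x * a ∈ I) (hπ : Continuous π) :
    A →⋆ₙₐ[ℂ] (H →L[ℂ] H) where
  toFun := extendOp π hleft
  map_smul' := extendOp_smul hleft hπ
  map_zero' := by simpa using extendOp_smul hleft hπ 0 0
  map_add' := extendOp_add hleft hπ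
  map_mul' := extendOp_mul hleft hπ
  map_star' := extendOp_star hleft hright hπ

variable (hright : ∀ a : A, ∀ x ∈ I, x * a ∈ I) (hπ : Continuous π)

theorem continuous_extend : Continuous (extend hleft hright hπ) :=
  AddMonoidHomClass.continuous_of_bound _ 1 fun a =>
    (norm_extendOp_le hleft hπ a).trans_eq (one_mul _).symm

theorem extend_coe (x : I) : extend hleft hright hπ x = π x := extendOp_coe hleft hπ x

end IdealRepresentation

theorem maxCstarSeminormIdeal_eq_maxCstarSeminorm {A : Type} [NonUnitalNormedRing A] [StarRing A]
    [NormedStarGroup A] [NormedSpace ℂ A] [IsScalarTower ℂ A A] [SMulCommClass ℂ A A]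
    [StarModule ℂ A] {I : NonUnitalStarSubalgebra ℂ A}
    (hleft : ∀ a : A, ∀ x ∈ I, a * x ∈ I) (hright : ∀ a : A, ∀ x ∈ I, x * a ∈ I) (x : I) :
    maxCstarSeminormIdeal I x = maxCstarSeminorm A x := by
  unfold maxCstarSeminormIdeal maxCstarSeminorm
  congr 1
  ext r
  constructor
  · rintro ⟨H, _, _, _, π, hπ, rfl⟩
    exact ⟨H, _, _, _, IdealRepresentation.extend hleft hright hπ,
      IdealRepresentation.continuous_extend hleft hright hπ,
      by rw [IdealRepresentation.extend_coe]⟩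
  · rintro ⟨H, _, _, _, σ, hσ, rfl⟩
    exact ⟨H, _, _, _, σ.comp (NonUnitalStarSubalgebraClass.subtype I),
      hσ.comp continuous_subtype_val, rfl⟩

theorem stmt6_general (A : Type) [NonUnitalNormedRing A] [StarRing A] [NormedStarGroup A]
    [NormedSpace ℂ A] [IsScalarTower ℂ A A] [SMulCommClass ℂ A A] [StarModule ℂ A]
    (I : NonUnitalStarSubalgebra ℂ A)
    (hleft : ∀ a : A, ∀ x ∈ I, a * x ∈ I) (hright : ∀ a : A, ∀ x ∈ I, x * a ∈ I) :
    (∀ x : I, maxCstarSeminormIdeal I x = maxCstarSeminorm A (x : A)) ∧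
    (∀ (B : Type) (_ : NonUnitalNormedRing B) (_ : StarRing B) (_ : CStarRing B)
      (_ : NormedSpace ℂ B) (_ : IsScalarTower ℂ B B) (_ : SMulCommClass ℂ B B)
      (_ : StarModule ℂ B) (_ : CompleteSpace B) (φ : A →⋆ₙₐ[ℂ] B),
      (∀ a : A, ‖φ a‖ = maxCstarSeminorm A a) →
      ∀ x : I, ‖φ (x : A)‖ = maxCstarSeminormIdeal I x) := by
  have hγ := maxCstarSeminormIdeal_eq_maxCstarSeminorm hleft hright
  exact ⟨hγ, fun B _ _ _ _ _ _ _ _ φ hφ x => (hφ x).trans (hγ x).symm⟩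

/-- For a two-sided *-ideal `I` of a Banach *-algebra `A`, the maximal C*-seminorm of `I`
coincides with the restriction of the maximal C*-seminorm of `A`; consequently, for any
*-homomorphism `φ` from `A` to a C*-algebra realizing the envelope norm of `A` (so that the
closure of `φ(A)` is `C*(A)`), the norm induced on (the closure of the image of) `I` is the
envelope norm of `I`, i.e. `C*(I)` is isometrically the closure of the image of `I` in `C*(A)`. -/
theorem stmt6 (A : Type) [NonUnitalNormedRing A] [StarRing A] [NormedStarGroup A]
    [NormedSpace ℂ A] [IsScalarTower ℂ A A] [SMulCommClass ℂ A A] [StarModule ℂ A]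
    [CompleteSpace A]
    (I : NonUnitalStarSubalgebra ℂ A)
    (hleft : ∀ a : A, ∀ x ∈ I, a * x ∈ I) (hright : ∀ a : A, ∀ x ∈ I, x * a ∈ I) :
    (∀ x : I, maxCstarSeminormIdeal I x = maxCstarSeminorm A (x : A)) ∧
    (∀ (B : Type) (_ : NonUnitalNormedRing B) (_ : StarRing B) (_ : CStarRing B)
      (_ : NormedSpace ℂ B) (_ : IsScalarTower ℂ B B) (_ : SMulCommClass ℂ B B)
      (_ : StarModule ℂ B) (_ : CompleteSpace B) (φ : A →⋆ₙₐ[ℂ] B),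
      (∀ a : A, ‖φ a‖ = maxCstarSeminorm A a) →
      ∀ x : I, ‖φ (x : A)‖ = maxCstarSeminormIdeal I x) :=
  stmt6_general A I hleft hright
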